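/- arXiv:2105.01425 — 5 statements merged into one kernel-verified Lean document; each statement's English description precedes it below -/
import Mathlib

section
/- Let a finite set of clients, each with a positive weight, and a finite set of k facilities be given, where each client i has a (possibly empty) set N(i) of accessible facilities. A feasible weight distribution assigns to each client with N(i) nonempty a splitting of her full weight among facilities in N(i), and assigns zero to clients with N(i) empty. Define the load of facility j as the total weight assigned to it. Then there exists a feasible weight distribution σ minimizing the sum of squares of facility loads, and any such minimizer is a client equilibrium: no client i places positive weight on a facility j in N(i) while some other facility in N(i) has strictly smaller load. -/
/-!
The feasible distributions form a nonempty compact set (a product of simplices), so the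
continuous potential `∑ⱼ ℓⱼ²` attains its minimum there. If a minimizer had a client `i`
with `σ(i)_j > 0` and `ℓ_{j'} < ℓ_j` for some `j' ∈ N(i)`, moving a small amount
`0 < ε < ℓ_j - ℓ_{j'}` of her weight from `j` to `j'` stays feasible and changes the potential
by `2ε(ε + ℓ_{j'} - ℓ_j) < 0`.
-/

open Finset

/-- Load of facility `j` under weight distribution `σ`. -/
def load {n k : ℕ} (σ : Fin n → Fin k → ℝ) (j : Fin k) : ℝ := ∑ i, σ i j

/-- A feasible client weight distribution: nonnegative, supported on accessible
facilities, and clients with a nonempty accessible set distribute their full weight. -/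
def Feasible {n k : ℕ} (w : Fin n → ℝ) (N : Fin n → Finset (Fin k))
    (σ : Fin n → Fin k → ℝ) : Prop :=
  (∀ i j, 0 ≤ σ i j) ∧
  (∀ i j, j ∉ N i → σ i j = 0) ∧
  (∀ i, (N i).Nonempty → ∑ j ∈ N i, σ i j = w i)

/-- Client equilibrium: no client puts positive weight on a facility while a
strictly less loaded accessible facility exists. -/
def ClientEq {n k : ℕ} (w : Fin n → ℝ) (N : Fin n → Finset (Fin k))
    (σ : Fin n → Fin k → ℝ) : Prop :=
  Feasible w N σ ∧
  ∀ i : Fin n, ∀ j ∈ N i, ∀ j' ∈ N i, 0 < σ i j → load σ j ≤ load σ j'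

variable {n k : ℕ} {w : Fin n → ℝ} {N : Fin n → Finset (Fin k)} {σ : Fin n → Fin k → ℝ}

def loadPotential (σ : Fin n → Fin k → ℝ) : ℝ := ∑ j, load σ j ^ 2

theorem exists_feasible (hw : ∀ i, 0 ≤ w i) (N : Fin n → Finset (Fin k)) :
    ∃ σ, Feasible w N σ := by
  refine ⟨fun i => if h : (N i).Nonempty then Pi.single h.choose (w i) else 0, ?_, ?_, ?_⟩
  · intro i j
    dsimp only
    split_ifs with h
    · exact (Pi.single_nonneg.2 (hw i) : (0 : Fin k → ℝ) ≤ _) j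
    · exact le_rfl
  · intro i j hj
    dsimp only
    split_ifs with h
    · exact Pi.single_eq_of_ne (ne_of_mem_of_not_mem h.choose_spec hj).symm _
    · rfl
  · intro i h
    simp only [h, dif_pos]
    exact Finset.sum_pi_single' _ _ _ |>.trans (if_pos h.choose_spec)

theorem Feasible.mem_Icc (hw : ∀ i, 0 ≤ w i) (hσ : Feasible w N σ) (i : Fin n) (j : Fin k) :
    σ i j ∈ Set.Icc 0 (w i) := by
  obtain ⟨hnonneg, hsupp, hsum⟩ := hσ
  refine ⟨hnonneg i j, ?_⟩
  by_cases hj : j ∈ N i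
  · calc σ i j ≤ ∑ j' ∈ N i, σ i j' := single_le_sum (fun j' _ => hnonneg i j') hj
      _ = w i := hsum i ⟨j, hj⟩
  · rw [hsupp i j hj]
    exact hw i

theorem isClosed_setOf_feasible (w : Fin n → ℝ) (N : Fin n → Finset (Fin k)) :
    IsClosed {σ | Feasible w N σ} := by
  have hcoord (i : Fin n) (j : Fin k) : Continuous fun σ : Fin n → Fin k → ℝ => σ i j := by
    fun_prop
  simp only [Feasible, Set.ofPred_and, Set.ofPred_forall]
  refine .inter ?_ (.inter ?_ ?_)
  · exact isClosed_iInter fun i => isClosed_iInter fun j =>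
      isClosed_le continuous_const (hcoord i j)
  · exact isClosed_iInter fun i => isClosed_iInter fun j =>
      isClosed_iInter fun _ => isClosed_eq (hcoord i j) continuous_const
  · exact isClosed_iInter fun i => isClosed_iInter fun _ =>
      isClosed_eq (continuous_finsetSum _ fun j _ => hcoord i j) continuous_const

theorem isCompact_setOf_feasible (hw : ∀ i, 0 ≤ w i) (N : Fin n → Finset (Fin k)) :
    IsCompact {σ | Feasible w N σ} :=
  (isCompact_univ_pi fun i => isCompact_univ_pi fun _ => isCompact_Icc (a := 0) (b := w i))
    |>.of_isClosed_subset (isClosed_setOf_feasible w N)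
      fun _ hσ i _ j _ => hσ.mem_Icc hw i j

theorem continuous_loadPotential : Continuous (loadPotential : (Fin n → Fin k → ℝ) → ℝ) := by
  unfold loadPotential load
  fun_prop

theorem exists_isMinOn_loadPotential (hw : ∀ i, 0 ≤ w i) (N : Fin n → Finset (Fin k)) :
    ∃ σ ∈ {σ | Feasible w N σ}, IsMinOn loadPotential {σ | Feasible w N σ} σ :=
  (isCompact_setOf_feasible hw N).exists_isMinOn (exists_feasible hw N)
    continuous_loadPotential.continuousOn

theorem load_add (σ τ : Fin n → Fin k → ℝ) : load (σ + τ) = load σ + load τ :=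
  funext fun _ => sum_add_distrib

theorem load_single (i : Fin n) (v : Fin k → ℝ) : load (Pi.single i v) = v := by
  ext l
  rw [load, Fintype.sum_eq_single i fun i' hi' => by simp [Pi.single_eq_of_ne hi']]
  simp

def moveWeight (σ : Fin n → Fin k → ℝ) (i : Fin n) (j j' : Fin k) (ε : ℝ) :
    Fin n → Fin k → ℝ :=
  σ + Pi.single i (Pi.single j' ε - Pi.single j ε)

theorem load_moveWeight (σ : Fin n → Fin k → ℝ) (i : Fin n) (j j' : Fin k) (ε : ℝ) :
    load (moveWeight σ i j j' ε) = load σ + (Pi.single j' ε - Pi.single j ε) := by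
  rw [moveWeight, load_add, load_single]

theorem moveWeight_apply_self (σ : Fin n → Fin k → ℝ) (i : Fin n) (j j' : Fin k) (ε : ℝ) :
    moveWeight σ i j j' ε i = σ i + (Pi.single j' ε - Pi.single j ε) := by
  simp [moveWeight]

theorem moveWeight_apply_of_ne (σ : Fin n → Fin k → ℝ) {i i₁ : Fin n} (hi : i₁ ≠ i)
    (j j' : Fin k) (ε : ℝ) : moveWeight σ i j j' ε i₁ = σ i₁ := by
  simp [moveWeight, Pi.single_eq_of_ne hi]

theorem Feasible.moveWeight (hσ : Feasible w N σ) {i : Fin n} {j j' : Fin k}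
    (hj : j ∈ N i) (hj' : j' ∈ N i) {ε : ℝ} (hε : 0 ≤ ε) (hεσ : ε ≤ σ i j) :
    Feasible w N (moveWeight σ i j j' ε) := by
  obtain ⟨hnonneg, hsupp, hsum⟩ := hσ
  refine ⟨fun i₁ l => ?_, fun i₁ l hl => ?_, fun i₁ hi₁ => ?_⟩
  · obtain rfl | hi := eq_or_ne i₁ i
    · have hgain : 0 ≤ (Pi.single j' ε : Fin k → ℝ) l :=
        (Pi.single_nonneg.2 hε : (0 : Fin k → ℝ) ≤ Pi.single j' ε) l
      have hloss : (Pi.single j ε : Fin k → ℝ) l ≤ σ i₁ l := by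
        obtain rfl | hl := eq_or_ne l j
        · simpa using hεσ
        · simpa [Pi.single_eq_of_ne hl] using hnonneg i₁ l
      rw [moveWeight_apply_self, Pi.add_apply, Pi.sub_apply]
      linarith
    · rw [moveWeight_apply_of_ne _ hi]
      exact hnonneg i₁ l
  · obtain rfl | hi := eq_or_ne i₁ i
    · rw [moveWeight_apply_self, Pi.add_apply, Pi.sub_apply,
        Pi.single_eq_of_ne (ne_of_mem_of_not_mem hj' hl).symm,
        Pi.single_eq_of_ne (ne_of_mem_of_not_mem hj hl).symm, hsupp i₁ l hl, sub_zero, add_zero]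
    · rw [moveWeight_apply_of_ne _ hi]
      exact hsupp i₁ l hl
  · obtain rfl | hi := eq_or_ne i₁ i
    · simp only [moveWeight_apply_self, Pi.add_apply, Pi.sub_apply]
      rw [sum_add_distrib, sum_sub_distrib, sum_pi_single', sum_pi_single', if_pos hj,
        if_pos hj', hsum i₁ hi₁, sub_self, add_zero]
    · rw [moveWeight_apply_of_ne _ hi]
      exact hsum i₁ hi₁

theorem loadPotential_moveWeight (σ : Fin n → Fin k → ℝ) (i : Fin n) {j j' : Fin k}
    (hjj' : j ≠ j') (ε : ℝ) :
    loadPotential (moveWeight σ i j j' ε) =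
      loadPotential σ + 2 * ε * (ε + load σ j' - load σ j) := by
  have hchange : ∑ l, (load (moveWeight σ i j j' ε) l ^ 2 - load σ l ^ 2) =
      ((load σ j - ε) ^ 2 - load σ j ^ 2) + ((load σ j' + ε) ^ 2 - load σ j' ^ 2) := by
    rw [Fintype.sum_eq_add j j' hjj' fun l hl => by
      simp [load_moveWeight, Pi.single_eq_of_ne hl.1, Pi.single_eq_of_ne hl.2]]
    simp [load_moveWeight, Pi.single_eq_of_ne hjj', Pi.single_eq_of_ne hjj'.symm]
    ring
  unfold loadPotential
  rw [sum_sub_distrib] at hchange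
  linarith

theorem Feasible.clientEq_of_isMinOn (hσ : Feasible w N σ)
    (hmin : IsMinOn loadPotential {σ | Feasible w N σ} σ) : ClientEq w N σ := by
  refine ⟨hσ, fun i j hj j' hj' hpos => ?_⟩
  by_contra! hlt
  have hjj' : j ≠ j' := by rintro rfl; exact lt_irrefl _ hlt
  set ε := min (σ i j) ((load σ j - load σ j') / 2)
  have hε : 0 < ε := lt_min hpos (by linarith)
  have hεσ : ε ≤ σ i j := min_le_left _ _
  have hεlt : ε < load σ j - load σ j' := (min_le_right _ _).trans_lt (by linarith)
  have hle := hmin (hσ.moveWeight hj hj' hε.le hεσ)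
  rw [Set.mem_ofPred_eq, loadPotential_moveWeight σ i hjj'] at hle
  have hdecrease : 2 * ε * (ε + load σ j' - load σ j) < 0 :=
    mul_neg_of_pos_of_neg (by positivity) (by linarith)
  linarith

/-- A minimizer of the sum of squared loads over the feasible set exists,
and every such minimizer is a client equilibrium. -/
theorem minimizer_exists_and_is_client_equilibrium (n k : ℕ)
    (w : Fin n → ℝ) (hw : ∀ i, 0 < w i) (N : Fin n → Finset (Fin k)) :
    (∃ σ : Fin n → Fin k → ℝ, Feasible w N σ ∧
      ∀ σ' : Fin n → Fin k → ℝ, Feasible w N σ' →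
        ∑ j, (load σ j) ^ 2 ≤ ∑ j, (load σ' j) ^ 2) ∧
    (∀ σ : Fin n → Fin k → ℝ, Feasible w N σ →
      (∀ σ' : Fin n → Fin k → ℝ, Feasible w N σ' →
        ∑ j, (load σ j) ^ 2 ≤ ∑ j, (load σ' j) ^ 2) →
      ClientEq w N σ) := by
  obtain ⟨σ, hσ, hmin⟩ := exists_isMinOn_loadPotential (fun i => (hw i).le) N
  exact ⟨⟨σ, hσ, fun σ' hσ' => hmin hσ'⟩,
    fun σ hσ hmin => hσ.clientEq_of_isMinOn fun σ' hσ' => hmin σ' hσ'⟩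
end

section
/- Let σ be a client equilibrium and define the 'shares-a-client' relation on facilities: p ~ q iff some client places positive weight on both p and q. Then any two facilities connected by a finite chain under this relation have equal loads; i.e., all facilities in the same connected component of the sharing graph have the same load in σ. -/
open Finset

/-- The sharing relation on facilities: some client puts positive weight on both. -/
def Shares {n k : ℕ} (σ : Fin n → Fin k → ℝ) (p q : Fin k) : Prop :=
  ∃ i : Fin n, 0 < σ i p ∧ 0 < σ i q

variable {n k : ℕ} {w : Fin n → ℝ} {N : Fin n → Finset (Fin k)} {σ : Fin n → Fin k → ℝ}

theorem Feasible.mem_of_pos (hσ : Feasible w N σ) {i : Fin n} {j : Fin k} (hpos : 0 < σ i j) :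
    j ∈ N i := by
  by_contra hj
  exact hpos.ne' (hσ.2.1 i j hj)

theorem ClientEq.load_eq_of_shares (hσ : ClientEq w N σ) {p q : Fin k} (hpq : Shares σ p q) :
    load σ p = load σ q := by
  obtain ⟨i, hp, hq⟩ := hpq
  have hpN := hσ.1.mem_of_pos hp
  have hqN := hσ.1.mem_of_pos hq
  exact le_antisymm (hσ.2 i p hpN q hqN hp) (hσ.2 i q hqN p hpN hq)

theorem shared_component_equal_load_general (n k : ℕ)
    (w : Fin n → ℝ) (N : Fin n → Finset (Fin k))
    (σ : Fin n → Fin k → ℝ) (heq : ClientEq w N σ)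
    (p q : Fin k) (hchain : Relation.ReflTransGen (Shares σ) p q) :
    load σ p = load σ q := by
  simpa [Relation.reflTransGen_eq_self] using
    hchain.lift (p := Eq) (load σ) fun _ _ => heq.load_eq_of_shares

/-- In a client equilibrium, all facilities in the same connected component of the
sharing graph have equal load. -/
theorem shared_component_equal_load (n k : ℕ)
    (w : Fin n → ℝ) (hw : ∀ i, 0 < w i) (N : Fin n → Finset (Fin k))
    (σ : Fin n → Fin k → ℝ) (heq : ClientEq w N σ)
    (p q : Fin k) (hchain : Relation.ReflTransGen (Shares σ) p q) :
    load σ p = load σ q :=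
  shared_component_equal_load_general n k w N σ heq p q hchain
end

section
/- For a set T of facilities, let A(T) denote the union of attraction sets (clients that have some facility of T accessible), and w(A(T)) its total weight. Let M be a minimum neighborhood set, i.e., a nonempty set minimizing w(A(T))/|T| over all nonempty T ⊆ F, with minimum ratio ρ = w(A(M))/|M|. Then in every client equilibrium σ, each facility j ∈ M has load exactly ℓ_j(σ) = ρ. -/
/-!
Let `ρ` be the minimum neighbourhood ratio. If some facility had load below `ρ`, the set `T` of
facilities with load below `ρ` would be nonempty, and in equilibrium every client that can reach
`T` puts all of its weight on `T` (otherwise it would patronize a facility loaded more heavily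
than an accessible one in `T`). Hence `w(A(T))` is the total load on `T`, which is less than
`|T| ρ`, contradicting the minimality of `ρ`. So every load is at least `ρ`; on the other hand the
total load on `M` is at most `w(A(M)) = |M| ρ`, since only clients of `A(M)` contribute to it.
-/

open Finset

/-- Total weight of the attraction set of a facility set `T`: clients having an
accessible facility in `T`. -/
def wA {n k : ℕ} (w : Fin n → ℝ) (N : Fin n → Finset (Fin k))
    (T : Finset (Fin k)) : ℝ :=
  ∑ i ∈ Finset.univ.filter (fun i => (N i ∩ T).Nonempty), w i

noncomputable def loadSublevel {n k : ℕ} (σ : Fin n → Fin k → ℝ) (c : ℝ) : Finset (Fin k) :=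
  univ.filter fun j => load σ j < c

section

variable {n k : ℕ} {w : Fin n → ℝ} {N : Fin n → Finset (Fin k)} {σ : Fin n → Fin k → ℝ}

theorem sum_load_eq_sum_sum (σ : Fin n → Fin k → ℝ) (T : Finset (Fin k)) :
    ∑ j ∈ T, load σ j = ∑ i, ∑ j ∈ T, σ i j :=
  Finset.sum_comm

namespace Feasible

theorem sum_eq_sum_inter (h : Feasible w N σ) (i : Fin n) (T : Finset (Fin k)) :
    ∑ j ∈ T, σ i j = ∑ j ∈ N i ∩ T, σ i j :=
  (sum_subset inter_subset_right fun j hjT hj =>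
    h.2.1 i j fun hjN => hj (mem_inter.2 ⟨hjN, hjT⟩)).symm

theorem sum_eq_zero_of_not_nonempty_inter (h : Feasible w N σ) {i : Fin n} {T : Finset (Fin k)}
    (hi : ¬(N i ∩ T).Nonempty) : ∑ j ∈ T, σ i j = 0 := by
  rw [h.sum_eq_sum_inter, not_nonempty_iff_eq_empty.1 hi, sum_empty]

theorem sum_le_weight (h : Feasible w N σ) {i : Fin n} (hi : (N i).Nonempty)
    (T : Finset (Fin k)) : ∑ j ∈ T, σ i j ≤ w i := by
  rw [h.sum_eq_sum_inter, ← h.2.2 i hi]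
  exact sum_le_sum_of_subset_of_nonneg inter_subset_left fun j _ _ => h.1 i j

theorem sum_load_eq_sum_attraction (h : Feasible w N σ) (T : Finset (Fin k)) :
    ∑ j ∈ T, load σ j = ∑ i ∈ univ.filter (fun i => (N i ∩ T).Nonempty), ∑ j ∈ T, σ i j := by
  rw [sum_load_eq_sum_sum, ← sum_filter_add_sum_filter_not univ fun i => (N i ∩ T).Nonempty,
    sum_eq_zero fun i hi => h.sum_eq_zero_of_not_nonempty_inter (mem_filter.1 hi).2, add_zero]

theorem sum_load_le_wA (h : Feasible w N σ) (T : Finset (Fin k)) :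
    ∑ j ∈ T, load σ j ≤ wA w N T := by
  rw [h.sum_load_eq_sum_attraction, wA]
  exact sum_le_sum fun i hi =>
    h.sum_le_weight ((mem_filter.1 hi).2.mono inter_subset_left) T

end Feasible

namespace ClientEq

theorem sum_loadSublevel_eq_weight (h : ClientEq w N σ) {i : Fin n} {c : ℝ}
    (hi : (N i ∩ loadSublevel σ c).Nonempty) : ∑ j ∈ loadSublevel σ c, σ i j = w i := by
  obtain ⟨j', hj'⟩ := hi
  obtain ⟨hj'N, hj'T⟩ := mem_inter.1 hj'
  have hj'c : load σ j' < c := (mem_filter.1 hj'T).2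
  have hout : ∀ j ∈ N i, j ∉ loadSublevel σ c → σ i j = 0 := by
    intro j hj hjc
    refine le_antisymm (not_lt.1 fun hpos => hjc ?_) (h.1.1 i j)
    exact mem_filter.2 ⟨mem_univ j, (h.2 i j hj j' hj'N hpos).trans_lt hj'c⟩
  rw [h.1.sum_eq_sum_inter, ← h.1.2.2 i ⟨j', hj'N⟩]
  exact sum_subset inter_subset_left fun j hj hjT =>
    hout j hj fun hjc => hjT (mem_inter.2 ⟨hj, hjc⟩)

theorem wA_loadSublevel (h : ClientEq w N σ) (c : ℝ) :
    wA w N (loadSublevel σ c) = ∑ j ∈ loadSublevel σ c, load σ j := by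
  rw [h.1.sum_load_eq_sum_attraction, wA]
  exact (sum_congr rfl fun i hi => h.sum_loadSublevel_eq_weight (mem_filter.1 hi).2).symm

theorem le_load (h : ClientEq w N σ) {ρ : ℝ}
    (hρ : ∀ T : Finset (Fin k), T.Nonempty → ρ ≤ wA w N T / (T.card : ℝ)) (j : Fin k) :
    ρ ≤ load σ j := by
  by_contra! hj
  have hT : (loadSublevel σ ρ).Nonempty := ⟨j, mem_filter.2 ⟨mem_univ j, hj⟩⟩
  have hlt : ∑ j ∈ loadSublevel σ ρ, load σ j < ∑ _j ∈ loadSublevel σ ρ, ρ :=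
    sum_lt_sum_of_nonempty hT fun j hj => (mem_filter.1 hj).2
  have hle := hρ _ hT
  rw [h.wA_loadSublevel, le_div_iff₀ (by exact_mod_cast hT.card_pos)] at hle
  rw [sum_const, nsmul_eq_mul] at hlt
  linarith

end ClientEq

end

theorem minimum_neighborhood_set_load_general (n k : ℕ)
    (w : Fin n → ℝ) (N : Fin n → Finset (Fin k))
    (M : Finset (Fin k))
    (hmin : ∀ T : Finset (Fin k), T.Nonempty →
      wA w N M / (M.card : ℝ) ≤ wA w N T / (T.card : ℝ))
    (σ : Fin n → Fin k → ℝ) (heq : ClientEq w N σ) :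
    ∀ j ∈ M, load σ j = wA w N M / (M.card : ℝ) := by
  intro j hj
  set ρ := wA w N M / (M.card : ℝ)
  have hlow : ∀ j ∈ M, ρ ≤ load σ j := fun j _ => heq.le_load hmin j
  have hsum : ∑ _j ∈ M, ρ = ∑ j ∈ M, load σ j := by
    refine le_antisymm (sum_le_sum hlow) ?_
    have hM : (M.card : ℝ) ≠ 0 := by exact_mod_cast (card_pos.2 ⟨j, hj⟩).ne'
    calc ∑ j ∈ M, load σ j ≤ wA w N M := heq.1.sum_load_le_wA M
      _ = ∑ _j ∈ M, ρ := by rw [sum_const, nsmul_eq_mul, mul_div_cancel₀ _ hM]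
  exact ((sum_eq_sum_iff_of_le hlow).1 hsum j hj).symm

/-- In every client equilibrium, each facility of a minimum neighborhood set
has load exactly the minimum neighborhood ratio. -/
theorem minimum_neighborhood_set_load (n k : ℕ)
    (w : Fin n → ℝ) (hw : ∀ i, 0 < w i) (N : Fin n → Finset (Fin k))
    (M : Finset (Fin k)) (hM : M.Nonempty)
    (hmin : ∀ T : Finset (Fin k), T.Nonempty →
      wA w N M / (M.card : ℝ) ≤ wA w N T / (T.card : ℝ))
    (σ : Fin n → Fin k → ℝ) (heq : ClientEq w N σ) :
    ∀ j ∈ M, load σ j = wA w N M / (M.card : ℝ) :=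
  minimum_neighborhood_set_load_general n k w N M hmin σ heq
end

section
/- The Price of Anarchy of the two-sided facility location game with arbitrary feasible client behavior is at most 2: if (s, σ) is a subgame perfect equilibrium and OPT maximizes the weighted participation rate, then W(OPT) ≤ 2·W(s). -/
/-!
Compare an optimal placement `t` with an equilibrium `s` client by client. Clients covered by
both placements contribute at most `W(s)`. Every client covered by `t` but not by `s` lies in
the shopping range of some optimal position `t p`. If facility `p` moves to `t p`, it is the only
facility such a client can reach, so it collects that client's whole weight. By the equilibrium
condition these weights are therefore bounded by the current load of `p`. Summing over `p`, the
loads add up to `W(s)`, so `W(t) ≤ W(s) + W(s)`.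
-/

open Finset

/-- Facilities accessible to client `i` under placement `s`. -/
def NsF {n k : ℕ} (E : Fin n → Fin n → Bool) (s : Fin k → Fin n) (i : Fin n) :
    Finset (Fin k) :=
  Finset.univ.filter (fun j => s j = i ∨ E i (s j) = true)

/-- Weighted participation rate: total weight of clients covered by `s`. -/
def Wrate {n k : ℕ} (w : Fin n → ℕ) (E : Fin n → Fin n → Bool)
    (s : Fin k → Fin n) : ℕ :=
  ∑ i ∈ Finset.univ.filter (fun i => (NsF E s i).Nonempty), w i

theorem Finset.sum_biUnion_le_sum_sum {ι α M : Type*} [DecidableEq α] [AddCommMonoid M]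
    [PartialOrder M] [CanonicallyOrderedAdd M] [IsOrderedAddMonoid M]
    (s : Finset ι) (t : ι → Finset α) (f : α → M) :
    ∑ a ∈ s.biUnion t, f a ≤ ∑ i ∈ s, ∑ a ∈ t i, f a := by
  rw [← sup_eq_biUnion]
  refine s.apply_sup_le_sum (f := fun u => ∑ a ∈ u, f a) sum_empty fun {u v} => ?_
  rw [sup_eq_union, ← sum_union_inter]
  exact le_self_add

section Feasible

variable {n k : ℕ} {w : Fin n → ℝ} {N : Fin n → Finset (Fin k)}
  {σ : Fin n → Fin k → ℝ}

theorem Feasible.sum_load (h : Feasible w N σ) :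
    ∑ j, load σ j = ∑ i ∈ univ.filter (fun i => (N i).Nonempty), w i := by
  obtain ⟨-, hsupp, hsum⟩ := h
  have hrow : ∀ i, ∑ j, σ i j = ∑ j ∈ N i, σ i j := fun i =>
    (sum_subset (subset_univ _) fun j _ hj => hsupp i j hj).symm
  simp only [load, sum_filter]
  rw [sum_comm]
  refine sum_congr rfl fun i _ => ?_
  split_ifs with hi
  · rw [hrow, hsum i hi]
  · rw [hrow, not_nonempty_iff_eq_empty.mp hi, sum_empty]

theorem Feasible.sum_le_load_of_eq_singleton (h : Feasible w N σ) {A : Finset (Fin n)} {j : Fin k}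
    (hA : ∀ i ∈ A, N i = {j}) : ∑ i ∈ A, w i ≤ load σ j := by
  obtain ⟨hnonneg, -, hsum⟩ := h
  calc ∑ i ∈ A, w i = ∑ i ∈ A, σ i j :=
        sum_congr rfl fun i hi => by simpa [hA i hi] using (hsum i (by simp [hA i hi])).symm
    _ ≤ load σ j := sum_le_sum_of_subset_of_nonneg (subset_univ _) fun i _ _ => hnonneg i j

end Feasible

section Placement

variable {n k : ℕ} (E : Fin n → Fin n → Bool)

def newlyCovered (s : Fin k → Fin n) (v : Fin n) : Finset (Fin n) :=
  univ.filter fun i => ¬(NsF E s i).Nonempty ∧ (v = i ∨ E i v = true)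

variable {E}

theorem NsF_update_eq_singleton {s : Fin k → Fin n} {v i : Fin n} (p : Fin k)
    (hi : i ∈ newlyCovered E s v) : NsF E (Function.update s p v) i = {p} := by
  simp only [newlyCovered, mem_filter, mem_univ, true_and, not_nonempty_iff_eq_empty] at hi
  obtain ⟨huncovered, hv⟩ := hi
  ext j
  rcases eq_or_ne j p with rfl | hj
  · simpa [NsF] using hv
  · have : j ∉ NsF E s i := by simp [huncovered]
    simpa [NsF, hj] using this

theorem Wrate_le_add_sum_newlyCovered (w : Fin n → ℕ) (s t : Fin k → Fin n) :
    Wrate w E t ≤ Wrate w E s + ∑ p, ∑ i ∈ newlyCovered E s (t p), w i := by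
  unfold Wrate
  rw [← sum_filter_add_sum_filter_not _ fun i => (NsF E s i).Nonempty]
  gcongr ?_ + ?_
  · exact sum_le_sum_of_subset (monotone_filter_left _ (filter_subset _ _))
  · refine (sum_le_sum_of_subset fun i hi => ?_).trans (sum_biUnion_le_sum_sum _ _ _)
    simp only [mem_filter, mem_univ, true_and] at hi
    obtain ⟨⟨p, hp⟩, huncovered⟩ := hi
    simp only [NsF, mem_filter, mem_univ, true_and] at hp
    refine mem_biUnion.mpr ⟨p, mem_univ p, ?_⟩
    simp [newlyCovered, not_nonempty_iff_eq_empty.mp huncovered, hp]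

end Placement

theorem poa_at_most_two_general (n k : ℕ)
    (w : Fin n → ℕ) (E : Fin n → Fin n → Bool)
    (σmap : (Fin k → Fin n) → Fin n → Fin k → ℝ)
    (hfeas : ∀ s : Fin k → Fin n, Feasible (fun i => (w i : ℝ)) (NsF E s) (σmap s))
    (s : Fin k → Fin n)
    (hSPE : ∀ (p : Fin k) (v : Fin n),
      load (σmap (Function.update s p v)) p ≤ load (σmap s) p) :
    ∀ t : Fin k → Fin n, Wrate w E t ≤ 2 * Wrate w E s := by
  intro t
  have hdeviation :
      ∀ p, ∑ i ∈ newlyCovered E s (t p), (w i : ℝ) ≤ load (σmap s) p := fun p =>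
    ((hfeas _).sum_le_load_of_eq_singleton fun _ hi => NsF_update_eq_singleton p hi).trans
      (hSPE p (t p))
  have hloads : ∑ p, load (σmap s) p = Wrate w E s := by
    rw [(hfeas s).sum_load, Wrate, Nat.cast_sum]
  have : (Wrate w E t : ℝ) ≤ 2 * Wrate w E s :=
    calc (Wrate w E t : ℝ)
        ≤ Wrate w E s + ∑ p, ∑ i ∈ newlyCovered E s (t p), (w i : ℝ) :=
          mod_cast Wrate_le_add_sum_newlyCovered w s t
      _ ≤ Wrate w E s + ∑ p, load (σmap s) p := by gcongr with p; exact hdeviation p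
      _ = 2 * Wrate w E s := by rw [hloads]; ring
  exact_mod_cast this

/-- Price of Anarchy upper bound: for any (arbitrary) feasible client behavior
`σmap` and any subgame perfect equilibrium placement `s`, the optimal welfare is
at most twice the equilibrium welfare. -/
theorem poa_at_most_two (n k : ℕ)
    (w : Fin n → ℕ) (hw : ∀ i, 0 < w i) (E : Fin n → Fin n → Bool)
    (σmap : (Fin k → Fin n) → Fin n → Fin k → ℝ)
    (hfeas : ∀ s : Fin k → Fin n, Feasible (fun i => (w i : ℝ)) (NsF E s) (σmap s))
    (s : Fin k → Fin n)
    (hSPE : ∀ (p : Fin k) (v : Fin n),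
      load (σmap (Function.update s p v)) p ≤ load (σmap s) p) :
    ∀ t : Fin k → Fin n, Wrate w E t ≤ 2 * Wrate w E s :=
  poa_at_most_two_general n k w E σmap hfeas s hSPE
end

section
/- If a flow of value k·ρ saturates all facility-to-sink edges of capacity ρ in the bipartite client–facility flow network, then for every nonempty set T of facilities, |T|·ρ ≤ w(A(T)); i.e., ρ is at most the minimum neighborhood ratio. -/
open Finset

/-! Flow into `T` can only come from clients with an accessible facility in `T`, and each
client sends at most its weight, so the inflow `|T| · ρ` is at most `w(A(T))`. -/

section FlowIntoFacilities

variable {ι κ R : Type*} [Fintype ι] [DecidableEq κ]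

theorem sum_filter_inter_nonempty_sum_eq [AddCommMonoid R] (x : ι → κ → R)
    (N : ι → Finset κ) (T : Finset κ) (hsupp : ∀ i j, j ∉ N i → x i j = 0) :
    ∑ i ∈ univ.filter (fun i => (N i ∩ T).Nonempty), ∑ j ∈ T, x i j =
      ∑ i, ∑ j ∈ T, x i j := by
  refine sum_filter_of_ne fun i _ hi => ?_
  obtain ⟨j, hjT, hx⟩ := exists_ne_zero_of_sum_ne_zero hi
  exact ⟨j, mem_inter.2 ⟨not_not.1 (mt (hsupp i j) hx), hjT⟩⟩

theorem sum_sum_le_sum_filter_inter_nonempty [Fintype κ] [AddCommMonoid R] [PartialOrder R]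
    [IsOrderedAddMonoid R] (x : ι → κ → R) (w : ι → R) (N : ι → Finset κ) (T : Finset κ)
    (hnn : ∀ i j, 0 ≤ x i j) (hsupp : ∀ i j, j ∉ N i → x i j = 0)
    (hsource : ∀ i, ∑ j, x i j ≤ w i) :
    ∑ j ∈ T, ∑ i, x i j ≤ ∑ i ∈ univ.filter (fun i => (N i ∩ T).Nonempty), w i := by
  rw [sum_comm, ← sum_filter_inter_nonempty_sum_eq x N T hsupp]
  refine sum_le_sum fun i _ => le_trans ?_ (hsource i)
  exact sum_le_sum_of_subset_of_nonneg (subset_univ T) fun j _ _ => hnn i j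

end FlowIntoFacilities

theorem saturating_flow_bounds_ratio_general (n k : ℕ)
    (w : Fin n → ℝ) (N : Fin n → Finset (Fin k)) (ρ : ℝ)
    (x : Fin n → Fin k → ℝ)
    (hnn : ∀ i j, 0 ≤ x i j)
    (hsupp : ∀ i j, j ∉ N i → x i j = 0)
    (hsource : ∀ i, ∑ j, x i j ≤ w i)
    (hsat : ∀ j, ∑ i, x i j = ρ) :
    ∀ T : Finset (Fin k), T.Nonempty → (T.card : ℝ) * ρ ≤ wA w N T := by
  intro T _
  calc (T.card : ℝ) * ρ = ∑ j ∈ T, ∑ i, x i j := by simp [hsat, mul_comm]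
    _ ≤ wA w N T := sum_sum_le_sum_filter_inter_nonempty x w N T hnn hsupp hsource

/-- If a flow saturates all facility-to-sink edges of capacity `ρ` in the
client–facility network (flow `x i j` from client `i` to facility `j`, respecting
accessibility and source capacities `w i`), then `|T| · ρ ≤ w(A(T))` for every
nonempty facility set `T`; i.e. `ρ` is at most the minimum neighborhood ratio. -/
theorem saturating_flow_bounds_ratio (n k : ℕ)
    (w : Fin n → ℝ) (hw : ∀ i, 0 < w i) (N : Fin n → Finset (Fin k)) (ρ : ℝ)
    (x : Fin n → Fin k → ℝ)
    (hnn : ∀ i j, 0 ≤ x i j)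
    (hsupp : ∀ i j, j ∉ N i → x i j = 0)
    (hsource : ∀ i, ∑ j, x i j ≤ w i)
    (hsat : ∀ j, ∑ i, x i j = ρ) :
    ∀ T : Finset (Fin k), T.Nonempty → (T.card : ℝ) * ρ ≤ wA w N T :=
  saturating_flow_bounds_ratio_general n k w N ρ x hnn hsupp hsource hsat
end
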